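/- arXiv:1111.5071 — 7 statements merged into one kernel-verified Lean document; each statement's English description precedes it below -/
import Mathlib

section
/- For every positive integer n, the sum over r from 1 to n and over all compositions (k_1,...,k_r) of n into positive parts of n!/(k_1!k_2!...k_r!) · k_1^{k_2} · k_2^{k_3} · ... · k_{r-1}^{k_r} equals (n+1)^{n-1}. -/
/-!
Weight each composition additionally by `x ^ k₁` and let `A_n(x)` be the resulting sum, with
`A_0(x) = 1` for the empty composition. Splitting off the first part `k₁ = m` gives
`A_n(x) = ∑_{m=1}^n C(n,m) x^m A_{n-m}(m)`, because the multinomial coefficient factors as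
`C(n,m)` times the one of the remaining parts, and the remaining weighted chain product starts
with `m ^ k₂`. The polynomials `x (x + n)^(n-1)` satisfy the same recursion: since
`C(n,m) m = n C(n-1,m-1)`, the right-hand side becomes `x` times the binomial expansion of
`(x + n)^(n-1)`. The theorem is the case `x = 1`.
-/

open Finset

/-- The chain product `k₁^{k₂} k₂^{k₃} ⋯ k_{r-1}^{k_r}` (interpreted as `1` when `r = 1`). -/
def chainProd {r : ℕ} (k : Fin r → ℕ) : ℕ :=
  ∏ i : Fin r, if h : (i : ℕ) + 1 < r then (k i) ^ (k ⟨(i : ℕ) + 1, h⟩) else 1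

theorem chainProd_cons {r : ℕ} (a : ℕ) (k : Fin (r + 1) → ℕ) :
    chainProd (Fin.cons a k : Fin (r + 2) → ℕ) = a ^ k 0 * chainProd k := by
  rw [chainProd, Fin.prod_univ_succ, chainProd]
  congr 1
  refine prod_congr rfl fun i _ => ?_
  by_cases h : (i : ℕ) + 1 < r + 1
  · rw [dif_pos (by simpa using h), dif_pos h, Fin.cons_succ]
    congr 1
  · rw [dif_neg (by simpa using h), dif_neg h]

theorem chainProd_cons_one {r : ℕ} (k : Fin r → ℕ) :
    chainProd (Fin.cons 1 k : Fin (r + 1) → ℕ) = chainProd k := by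
  cases r with
  | zero => simp [chainProd]
  | succ r => rw [chainProd_cons, one_pow, one_mul]

theorem Nat.multinomial_univ_fin_cons {r : ℕ} (a : ℕ) (k : Fin r → ℕ) :
    Nat.multinomial univ (Fin.cons a k : Fin (r + 1) → ℕ)
      = (a + ∑ i, k i).choose a * Nat.multinomial univ k := by
  apply Nat.eq_of_mul_eq_mul_left (by positivity : 0 < a.factorial * ∏ i, (k i).factorial)
  have spec := Nat.multinomial_spec (univ : Finset (Fin (r + 1))) (Fin.cons a k)
  rw [Fin.prod_univ_succ, Fin.sum_univ_succ] at spec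
  simp only [Fin.cons_zero, Fin.cons_succ] at spec
  rw [spec, ← Nat.add_choose_mul_factorial_mul_factorial, Nat.choose_symm_add,
    ← Nat.multinomial_spec univ k]
  ring

def compositions (r n : ℕ) : Finset (Fin r → ℕ) :=
  (Nat.antidiagonalTuple r n).filter (fun k => ∀ i, 1 ≤ k i)

theorem mem_compositions {r n : ℕ} {k : Fin r → ℕ} :
    k ∈ compositions r n ↔ ∑ i, k i = n ∧ ∀ i, 1 ≤ k i := by
  simp [compositions, Nat.mem_antidiagonalTuple]

theorem compositions_zero_zero : compositions 0 0 = {![]} := by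
  simp [compositions, Nat.antidiagonalTuple_zero_zero]

theorem compositions_zero_succ (n : ℕ) : compositions 0 (n + 1) = ∅ := by
  simp [compositions, Nat.antidiagonalTuple_zero_succ]

theorem compositions_eq_empty_of_lt {r n : ℕ} (h : n < r) : compositions r n = ∅ := by
  refine eq_empty_of_forall_notMem fun k hk => ?_
  obtain ⟨hsum, hpos⟩ := mem_compositions.1 hk
  have : r ≤ ∑ i, k i := by simpa using sum_le_sum fun i (_ : i ∈ univ) => hpos i
  omega

theorem sum_compositions_succ {M : Type*} [AddCommMonoid M] (s n : ℕ)
    (g : (Fin (s + 1) → ℕ) → M) :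
    ∑ k ∈ compositions (s + 1) n, g k
      = ∑ m ∈ Icc 1 n, ∑ k ∈ compositions s (n - m), g (Fin.cons m k) := by
  rw [sum_sigma']
  refine (sum_bij' (fun p _ => Fin.cons p.1 p.2) (fun k _ => ⟨k 0, Fin.tail k⟩)
    ?_ ?_ (fun _ _ => rfl) (fun k _ => Fin.cons_self_tail k) (fun _ _ => rfl)).symm
  · rintro ⟨m, k⟩ hmk
    simp only [mem_sigma, mem_Icc, mem_compositions] at hmk
    rw [mem_compositions, Fin.sum_univ_succ]
    refine ⟨by simp only [Fin.cons_zero, Fin.cons_succ]; omega, Fin.cases ?_ ?_⟩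
    · simpa using hmk.1.1
    · simpa using hmk.2.2
  · intro k hk
    rw [mem_compositions, Fin.sum_univ_succ] at hk
    simp only [mem_sigma, mem_Icc, mem_compositions]
    exact ⟨⟨hk.2 0, by omega⟩, by simp only [Fin.tail]; omega, fun i => hk.2 i.succ⟩

/-- `A_n(x)` of the header: `chainProd (Fin.cons x k)` is `x ^ k₁ * k₁ ^ k₂ * ⋯`, and the range
of `r` includes `r = 0`, so that the empty composition contributes `A_0(x) = 1`. -/
def chainSum (x n : ℕ) : ℕ :=
  ∑ r ∈ range (n + 1), ∑ k ∈ compositions r n,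
    Nat.multinomial univ k * chainProd (Fin.cons x k : Fin (r + 1) → ℕ)

theorem chainSum_zero (x : ℕ) : chainSum x 0 = 1 := by
  simp [chainSum, compositions_zero_zero, chainProd]

theorem chainSum_eq_sum_of_range_subset {x n : ℕ} {s : Finset ℕ} (h : range (n + 1) ⊆ s) :
    chainSum x n = ∑ r ∈ s, ∑ k ∈ compositions r n,
      Nat.multinomial univ k * chainProd (Fin.cons x k : Fin (r + 1) → ℕ) := by
  refine sum_subset h fun r _ hr => ?_
  rw [compositions_eq_empty_of_lt (by simpa using hr), sum_empty]

theorem chainSum_succ_eq_sum_choose (x n : ℕ) :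
    chainSum x (n + 1)
      = ∑ m ∈ Icc 1 (n + 1), (n + 1).choose m * x ^ m * chainSum m (n + 1 - m) := by
  have split_first : ∀ s, ∀ m ∈ Icc 1 (n + 1), ∀ k ∈ compositions s (n + 1 - m),
      Nat.multinomial univ (Fin.cons m k : Fin (s + 1) → ℕ)
          * chainProd (Fin.cons x (Fin.cons m k) : Fin (s + 2) → ℕ)
        = (n + 1).choose m * x ^ m
          * (Nat.multinomial univ k * chainProd (Fin.cons m k : Fin (s + 1) → ℕ)) := by
    intro s m hm k hk
    rw [mem_Icc] at hm
    rw [Nat.multinomial_univ_fin_cons, chainProd_cons, Fin.cons_zero,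
      (mem_compositions.1 hk).1, Nat.add_sub_cancel' hm.2]
    ring
  rw [chainSum, sum_range_succ', compositions_zero_succ, sum_empty, add_zero]
  simp_rw [sum_compositions_succ]
  rw [sum_comm]
  refine sum_congr rfl fun m hm => ?_
  rw [chainSum_eq_sum_of_range_subset (s := range (n + 1)), mul_sum]
  · exact sum_congr rfl fun s _ => by rw [mul_sum]; exact sum_congr rfl (split_first s m hm)
  · rw [mem_Icc] at hm
    exact range_subset_range.2 (by omega)

theorem chainSum_succ (x n : ℕ) : chainSum x (n + 1) = x * (x + (n + 1)) ^ n := by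
  induction n using Nat.strong_induction_on generalizing x with
  | _ n ih =>
    have binomial_term : ∀ j ∈ range (n + 1),
        (n + 1).choose (1 + j) * x ^ (1 + j) * chainSum (1 + j) (n + 1 - (1 + j))
          = x * (x ^ j * (n + 1) ^ (n - j) * n.choose j) := by
      intro j hj
      rw [mem_range, Nat.lt_succ_iff_lt_or_eq] at hj
      rw [add_comm 1 j]
      rcases hj with hj | rfl
      · have hpow : (n + 1) ^ (n - j) = (n + 1) ^ (n - j - 1) * (n + 1) := by
          rw [← pow_succ]; congr 1; omega
        rw [show n + 1 - (j + 1) = n - j - 1 + 1 by omega, ih (n - j - 1) (by omega),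
          show j + 1 + (n - j - 1 + 1) = n + 1 by omega, hpow]
        calc _ = x * x ^ j * (n + 1) ^ (n - j - 1) * ((n + 1).choose (j + 1) * (j + 1)) := by
              ring
          _ = _ := by rw [← Nat.add_one_mul_choose_eq]; ring
      · simp [chainSum_zero, pow_succ']
    rw [chainSum_succ_eq_sum_choose, ← Ico_add_one_right_eq_Icc, sum_Ico_eq_sum_range,
      Nat.add_sub_cancel, sum_congr rfl binomial_term, ← mul_sum, add_pow]
    simp only [Nat.cast_id]

theorem combinatorial_identity (n : ℕ) (hn : 1 ≤ n) :
    ∑ r ∈ Icc 1 n,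
      ∑ k ∈ (Nat.antidiagonalTuple r n).filter (fun k => ∀ i, 1 ≤ k i),
        (n.factorial / ∏ i, (k i).factorial) * chainProd k
      = (n + 1) ^ (n - 1) := by
  obtain ⟨m, rfl⟩ : ∃ m, n = m + 1 := ⟨n - 1, by omega⟩
  calc _ = ∑ r ∈ Icc 1 (m + 1), ∑ k ∈ compositions r (m + 1),
        Nat.multinomial univ k * chainProd (Fin.cons 1 k : Fin (r + 1) → ℕ) :=
        sum_congr rfl fun r _ => sum_congr rfl fun k hk => by
          rw [chainProd_cons_one, Nat.multinomial, (mem_compositions.1 hk).1]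
    _ = chainSum 1 (m + 1) := by
      rw [chainSum, range_eq_Ico, sum_eq_sum_Ico_succ_bot (by omega), compositions_zero_succ,
        sum_empty, zero_add, Ico_add_one_right_eq_Icc]
    _ = (m + 1 + 1) ^ (m + 1 - 1) := by
      rw [chainSum_succ, one_mul, Nat.add_sub_cancel, add_comm 1]
end

section
/- For all positive integers n and k with k < n, we have n^{n-k-1} = ∑_{j=1}^{n-k} C(n-k, j) · j · k^{j-1} · (n-k)^{n-k-j-1}. -/
/-! With `m = n - k`, the identity `C(m, j) * j = m * C(m - 1, j - 1)` turns the sum into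
`m * (k + m) ^ (m - 1) * m⁻¹` by the binomial theorem, and `k + m = n`. -/

open Finset

theorem sum_Icc_choose_mul_mul_pow {R : Type*} [CommSemiring R] (x y : R) (m : ℕ) :
    ∑ j ∈ Icc 1 m, (m.choose j : R) * j * x ^ (j - 1) * y ^ (m - j)
      = m * (x + y) ^ (m - 1) := by
  cases m with
  | zero => simp
  | succ m =>
    rw [← Ico_add_one_right_eq_Icc, sum_Ico_eq_sum_range, add_pow, mul_sum]
    refine sum_congr (by simp) fun i _ => ?_
    have hchoose : ((m + 1).choose (1 + i) : R) * ↑(1 + i) = (m + 1) * m.choose i := by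
      rw [add_comm 1 i]
      exact_mod_cast congrArg (Nat.cast : ℕ → R) (Nat.add_one_mul_choose_eq m i).symm
    rw [hchoose, show m + 1 - (1 + i) = m - i by omega, show 1 + i - 1 = i by omega]
    push_cast; ring

theorem binomial_expansion_identity_general (n k : ℕ) (hkn : k < n) :
    (n : ℝ) ^ ((n : ℤ) - k - 1)
      = ∑ j ∈ Icc 1 (n - k),
          ((n - k).choose j : ℝ) * j * (k : ℝ) ^ (j - 1)
            * ((n : ℝ) - k) ^ ((n : ℤ) - k - j - 1) := by
  set m := n - k
  have hm : (m : ℝ) ≠ 0 := Nat.cast_ne_zero.2 (by omega)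
  have hn : (n : ℝ) = k + m := by simp [m, hkn.le]
  have hnz : (n : ℤ) - k = m := by omega
  have hpow : ∀ j ∈ Icc 1 m,
      (m : ℝ) ^ ((m : ℤ) - j - 1) = (m : ℝ) ^ (m - j) * (m : ℝ)⁻¹ := by
    intro j hj
    rw [← zpow_natCast, ← zpow_sub_one₀ hm, Nat.cast_sub (mem_Icc.1 hj).2]
  calc (n : ℝ) ^ ((n : ℤ) - k - 1)
      = m * (k + m : ℝ) ^ (m - 1) * (m : ℝ)⁻¹ := by
        rw [hnz, mul_comm (m : ℝ), mul_inv_cancel_right₀ hm, ← hn, ← zpow_natCast,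
          Nat.cast_pred (by omega)]
    _ = ∑ j ∈ Icc 1 m,
          (m.choose j : ℝ) * j * (k : ℝ) ^ (j - 1) * (m : ℝ) ^ ((m : ℤ) - j - 1) := by
        rw [← sum_Icc_choose_mul_mul_pow, sum_mul]
        exact sum_congr rfl fun j hj => by rw [hpow j hj]; ring
    _ = _ := by simp only [hn, hnz, add_sub_cancel_left]

theorem binomial_expansion_identity (n k : ℕ) (hk : 1 ≤ k) (hkn : k < n) :
    (n : ℝ) ^ ((n : ℤ) - k - 1)
      = ∑ j ∈ Icc 1 (n - k),
          ((n - k).choose j : ℝ) * j * (k : ℝ) ^ (j - 1)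
            * ((n : ℝ) - k) ^ ((n : ℤ) - k - j - 1) :=
  binomial_expansion_identity_general n k hkn
end

section
/- For every positive integer n and every s with 1 ≤ s ≤ n, (n+1)^{n-1} = ∑_{r=1}^{s} ∑_{k_1+...+k_r = n, k_i ≥ 1} n!/(k_1!...k_r!) · k_1^{k_2}...k_{r-1}^{k_r} + ∑_{k_1,...,k_s ≥ 1, k_1+...+k_s < n} n!/(k_1!...k_s!(n-k_1-...-k_s)!) · k_s · k_1^{k_2}...k_{s-1}^{k_s} · (n-k_1-...-k_{s-1})^{n-k_1-...-k_s-1}. -/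
/-!
Call `A_r` the inner sum of the first term and `B_s` the second term. In a summand of `B_s`, write
`x = k_s` and `N = n - m`; the base of the last power is `x + N`, and the binomial theorem gives
`x (x + N)^{N-1} = x^N + ∑_{0<j<N} C(N,j) j x^j N^{N-1-j}`. Reading `x^N` as the extra factor
`k_s^{k_{s+1}}` of the chain product of the composition `(k_1, …, k_s, N)` of `n`, and the `j`-th
term as the summand of `B_{s+1}` for `(k_1, …, k_s, j)`, gives `B_s = A_{s+1} + B_{s+1}`.
For `s = 1` the same expansion with `x = 1` gives `(n+1)^{n-1} = A_1 + B_1`.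
-/

open Finset

namespace ChainSum

open Nat

theorem mul_add_pow_sub_one (x N : ℕ) (hN : 1 ≤ N) :
    x * (x + N) ^ (N - 1)
      = x ^ N + ∑ j ∈ Icc 1 (N - 1), N.choose j * j * x ^ j * N ^ (N - 1 - j) := by
  obtain ⟨p, rfl⟩ : ∃ p, N = p + 1 := ⟨N - 1, by omega⟩
  have hterm : ∀ i ∈ range p, x * (x ^ i * (p + 1) ^ (p - i) * p.choose i)
      = (p + 1).choose (i + 1) * (i + 1) * x ^ (i + 1) * (p + 1) ^ (p - (i + 1)) := by
    intro i hi
    have hip := mem_range.1 hi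
    rw [← add_one_mul_choose_eq, show p - i = p - (i + 1) + 1 by omega]
    ring
  rw [Nat.add_sub_cancel, add_pow, sum_range_succ, mul_add, mul_sum]
  simp only [Nat.cast_id]
  rw [sum_congr rfl hterm, ← Ico_add_one_right_eq_Icc, sum_Ico_eq_sum_range, Nat.choose_self,
    Nat.sub_self]
  simp only [add_comm 1, Nat.add_sub_cancel]
  ring

theorem factorial_div_mul_choose {n m j P : ℕ} (hP : P ∣ m !) (hm : m ≤ n) (hj : j ≤ n - m) :
    n ! / (P * (n - m)!) * (n - m).choose j = n ! / (P * j ! * (n - m - j)!) := by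
  have hD : P * (n - m)! ∣ n ! := by
    have := factorial_mul_factorial_dvd_factorial_add m (n - m)
    rw [Nat.add_sub_cancel' hm] at this
    exact (mul_dvd_mul_right hP _).trans this
  have hD' : j ! * (n - m - j)! ∣ (n - m)! := by
    simpa [Nat.add_sub_cancel' hj] using factorial_mul_factorial_dvd_factorial_add j (n - m - j)
  rw [choose_eq_factorial_div_factorial hj, Nat.div_mul_div_comm hD hD', mul_right_comm,
    Nat.mul_div_mul_right _ _ (factorial_pos _), mul_assoc]

def compositions (r m : ℕ) : Finset (Fin r → ℕ) :=
  (Nat.antidiagonalTuple r m).filter (fun k => ∀ i, 1 ≤ k i)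

theorem mem_compositions {r m : ℕ} {k : Fin r → ℕ} :
    k ∈ compositions r m ↔ ∑ i, k i = m ∧ ∀ i, 1 ≤ k i := by
  simp [compositions, Finset.Nat.mem_antidiagonalTuple]

theorem compositions_one {m : ℕ} (hm : 1 ≤ m) : compositions 1 m = {![m]} := by
  rw [compositions, Finset.Nat.antidiagonalTuple_one, filter_singleton, if_pos]
  simpa [Fin.forall_fin_one] using hm

theorem snoc_mem_compositions {r m c : ℕ} {k : Fin r → ℕ} (hk : k ∈ compositions r m)
    (hc : 1 ≤ c) : (Fin.snoc k c : Fin (r + 1) → ℕ) ∈ compositions (r + 1) (m + c) := by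
  rw [mem_compositions] at hk ⊢
  refine ⟨by simp [hk.1], Fin.lastCases (by simpa using hc) fun i => by simpa using hk.2 i⟩

theorem init_mem_compositions {r m : ℕ} {k : Fin (r + 1) → ℕ}
    (hk : k ∈ compositions (r + 1) m) :
    Fin.init k ∈ compositions r (m - k (Fin.last r))
      ∧ 1 ≤ k (Fin.last r) ∧ k (Fin.last r) ≤ m := by
  rw [mem_compositions, Fin.sum_univ_castSucc] at hk
  rw [mem_compositions, ← hk.1]
  exact ⟨⟨by simp [Fin.init], fun i => hk.2 _⟩, hk.2 _, by omega⟩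

theorem card_le_of_mem_compositions {r m : ℕ} {k : Fin r → ℕ} (hk : k ∈ compositions r m) :
    r ≤ m := by
  rw [mem_compositions] at hk
  simpa [← hk.1] using sum_le_sum fun i (_ : i ∈ univ) => hk.2 i

theorem sum_compositions_succ {M : Type*} [AddCommMonoid M] (r n : ℕ)
    (g : (Fin (r + 2) → ℕ) → M) :
    ∑ k ∈ compositions (r + 2) n, g k
      = ∑ m ∈ Icc (r + 1) (n - 1), ∑ k ∈ compositions (r + 1) m,
          g (Fin.snoc k (n - m)) := by
  rw [sum_sigma']
  refine sum_nbij' (fun k => (⟨n - k (Fin.last _), Fin.init k⟩ : Σ _ : ℕ, Fin (r + 1) → ℕ))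
    (fun p => Fin.snoc p.2 (n - p.1)) ?_ ?_ ?_ ?_ ?_
  · intro k hk
    obtain ⟨hinit, hlast⟩ := init_mem_compositions hk
    have := card_le_of_mem_compositions hinit
    rw [mem_sigma, mem_Icc]
    dsimp only
    exact ⟨by omega, hinit⟩
  · rintro ⟨m, k⟩ hk
    rw [mem_sigma, mem_Icc] at hk
    dsimp only at hk ⊢
    have := snoc_mem_compositions hk.2 (c := n - m) (by omega)
    rwa [Nat.add_sub_cancel' (by omega)] at this
  · intro k hk
    obtain ⟨-, -, hlast⟩ := init_mem_compositions hk
    simp [Nat.sub_sub_self hlast]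
  · rintro ⟨m, k⟩ hk
    rw [mem_sigma, mem_Icc] at hk
    dsimp only at hk ⊢
    simp only [Fin.snoc_last, Fin.init_snoc, Sigma.mk.injEq, heq_eq_eq, and_true]
    omega
  · intro k hk
    obtain ⟨-, -, hlast⟩ := init_mem_compositions hk
    simp [Nat.sub_sub_self hlast]

theorem sum_Icc_sum_compositions_succ {M : Type*} [AddCommMonoid M] (r n : ℕ)
    (h : ℕ → (Fin (r + 2) → ℕ) → M) :
    ∑ m' ∈ Icc (r + 2) (n - 1), ∑ k ∈ compositions (r + 2) m', h m' k
      = ∑ m ∈ Icc (r + 1) (n - 1), ∑ k ∈ compositions (r + 1) m,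
          ∑ j ∈ Icc 1 (n - m - 1), h (m + j) (Fin.snoc k j) := by
  simp_rw [sum_compositions_succ]
  rw [sum_comm' (t' := Icc (r + 1) (n - 1)) (s' := fun m => Icc (m + 1) (n - 1))
    (fun _ _ => by simp only [mem_Icc]; omega)]
  refine sum_congr rfl fun m hm => ?_
  rw [sum_comm]
  refine sum_congr rfl fun k _ => ?_
  have hm := (mem_Icc.1 hm).2
  have hshift : Icc (m + 1) (n - 1) = (Icc 1 (n - m - 1)).map (addLeftEmbedding m) := by
    rw [map_add_left_Icc]
    congr 1; omega
  rw [hshift, sum_map]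
  simp only [addLeftEmbedding_apply, add_tsub_cancel_left]

theorem chainProd_snoc {r : ℕ} (k : Fin (r + 1) → ℕ) (c : ℕ) :
    chainProd (Fin.snoc k c : Fin (r + 2) → ℕ) = chainProd k * k (Fin.last r) ^ c := by
  have hsucc : ∀ {r : ℕ} (k : Fin (r + 1) → ℕ),
      chainProd k = ∏ i : Fin r, k i.castSucc ^ k i.succ := fun k => by
    rw [chainProd, Fin.prod_univ_castSucc, dif_neg (by simp), mul_one]
    exact prod_congr rfl fun i _ => by rw [dif_pos (by simp)]; rfl
  rw [hsucc, hsucc, Fin.prod_univ_castSucc]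
  simp only [Fin.snoc_castSucc, Fin.snoc_last, Fin.succ_last, Fin.succ_castSucc]

theorem prod_factorial_snoc {r : ℕ} (k : Fin r → ℕ) (c : ℕ) :
    ∏ i, ((Fin.snoc k c : Fin (r + 1) → ℕ) i)! = (∏ i, (k i)!) * c ! := by
  simp [Fin.prod_univ_castSucc]

def headTerm (n : ℕ) {r : ℕ} (k : Fin r → ℕ) : ℕ :=
  n ! / (∏ i, (k i)!) * chainProd k

def headSum (n r : ℕ) : ℕ :=
  ∑ k ∈ compositions r n, headTerm n k

/-- `tailSum n t` is `B_{t+1}`: for `t + 1` parts summing to `m ≤ n`, the base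
`k (Fin.last t) + (n - m)` is `n - k₁ - ⋯ - k_t`. -/
def tailTerm (n m : ℕ) {t : ℕ} (k : Fin (t + 1) → ℕ) : ℕ :=
  n ! / ((∏ i, (k i)!) * (n - m)!)
    * (k (Fin.last t) * chainProd k * (k (Fin.last t) + (n - m)) ^ (n - m - 1))

def tailSum (n t : ℕ) : ℕ :=
  ∑ m ∈ Icc (t + 1) (n - 1), ∑ k ∈ compositions (t + 1) m, tailTerm n m k

theorem tailTerm_eq {n m t : ℕ} {k : Fin (t + 1) → ℕ} (hk : k ∈ compositions (t + 1) m)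
    (hmn : m < n) :
    tailTerm n m k = headTerm n (Fin.snoc k (n - m) : Fin (t + 2) → ℕ)
      + ∑ j ∈ Icc 1 (n - m - 1), tailTerm n (m + j) (Fin.snoc k j : Fin (t + 2) → ℕ) := by
  have hP : ∏ i, (k i)! ∣ m ! := by
    simpa [(mem_compositions.1 hk).1] using prod_factorial_dvd_factorial_sum univ k
  obtain ⟨x, hx⟩ : ∃ x, k (Fin.last t) = x := ⟨_, rfl⟩
  calc tailTerm n m k
      = n ! / ((∏ i, (k i)!) * (n - m)!) * chainProd k * (x * (x + (n - m)) ^ (n - m - 1)) := by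
        rw [tailTerm, hx]; ring
    _ = n ! / ((∏ i, (k i)!) * (n - m)!) * chainProd k * x ^ (n - m)
        + ∑ j ∈ Icc 1 (n - m - 1), n ! / ((∏ i, (k i)!) * (n - m)!) * (n - m).choose j
            * (j * chainProd k * x ^ j * (n - m) ^ (n - m - 1 - j)) := by
        rw [mul_add_pow_sub_one x (n - m) (by omega), mul_add, mul_sum]
        congr 1
        exact sum_congr rfl fun j _ => by ring
    _ = _ := by
        congr 1
        · rw [headTerm, prod_factorial_snoc, chainProd_snoc, hx]
          ring
        refine sum_congr rfl fun j hj => ?_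
        have hj := mem_Icc.1 hj
        rw [factorial_div_mul_choose hP hmn.le (by omega), tailTerm, prod_factorial_snoc,
          chainProd_snoc, Fin.snoc_last, hx, show j + (n - (m + j)) = n - m by omega,
          show n - (m + j) = n - m - j by omega, show n - m - j - 1 = n - m - 1 - j by omega]
        ring

theorem tailSum_eq_headSum_add_tailSum (n t : ℕ) :
    tailSum n t = headSum n (t + 2) + tailSum n (t + 1) := by
  rw [headSum, tailSum, tailSum, sum_compositions_succ, sum_Icc_sum_compositions_succ,
    ← sum_add_distrib]
  refine sum_congr rfl fun m hm => ?_
  have hmn : m < n := by have := mem_Icc.1 hm; omega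
  rw [← sum_add_distrib]
  exact sum_congr rfl fun k hk => tailTerm_eq hk hmn

theorem pow_eq_headSum_one_add_tailSum_zero {n : ℕ} (hn : 1 ≤ n) :
    (n + 1) ^ (n - 1) = headSum n 1 + tailSum n 0 := by
  have hhead : headSum n 1 = 1 := by
    simp [headSum, headTerm, compositions_one hn, chainProd, Nat.div_self (factorial_pos n)]
  have htail : tailSum n 0 = ∑ j ∈ Icc 1 (n - 1), n.choose j * j * 1 ^ j * n ^ (n - 1 - j) := by
    refine sum_congr rfl fun j hj => ?_
    have hj := mem_Icc.1 hj
    simp [compositions_one hj.1, tailTerm, chainProd,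
      choose_eq_factorial_div_factorial (by omega : j ≤ n), Nat.add_sub_cancel' (by omega : j ≤ n),
      show n - 1 - j = n - j - 1 by omega]
    ring
  rw [hhead, htail, add_comm n, ← one_mul ((1 + n) ^ (n - 1)), mul_add_pow_sub_one 1 n hn,
    one_pow]

theorem pow_eq_sum_headSum_add_tailSum {n t : ℕ} (htn : t + 1 ≤ n) :
    (n + 1) ^ (n - 1) = ∑ r ∈ Icc 1 (t + 1), headSum n r + tailSum n t := by
  induction t with
  | zero => simpa using pow_eq_headSum_one_add_tailSum_zero htn
  | succ t ih =>
    rw [sum_Icc_succ_top (by omega), add_assoc, ← tailSum_eq_headSum_add_tailSum]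
    exact ih (by omega)

theorem sub_sum_init_eq {n m t : ℕ} {k : Fin (t + 1) → ℕ} (hk : k ∈ compositions (t + 1) m)
    (hmn : m ≤ n) :
    n - ∑ i ∈ univ.filter (fun i : Fin (t + 1) => (i : ℕ) + 1 < t + 1), k i
      = k (Fin.last t) + (n - m) := by
  rw [mem_compositions, Fin.sum_univ_castSucc] at hk
  rw [sum_filter, Fin.sum_univ_castSucc]
  simp only [Fin.val_castSucc, Fin.val_last, add_lt_add_iff_right, Fin.is_lt, if_true,
    lt_irrefl, if_false, add_zero]
  omega

end ChainSum

open ChainSum in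
theorem induction_step (n s : ℕ) (hs : 1 ≤ s) (hsn : s ≤ n) :
    (n + 1) ^ (n - 1)
      = (∑ r ∈ Icc 1 s,
          ∑ k ∈ (Nat.antidiagonalTuple r n).filter (fun k => ∀ i, 1 ≤ k i),
            (n.factorial / ∏ i, (k i).factorial) * chainProd k)
        + ∑ m ∈ Icc s (n - 1),
            ∑ k ∈ (Nat.antidiagonalTuple s m).filter (fun k => ∀ i, 1 ≤ k i),
              (n.factorial / ((∏ i, (k i).factorial) * (n - m).factorial))
                * (k ⟨s - 1, by omega⟩ * chainProd k
                  * (n - ∑ t ∈ univ.filter (fun t : Fin s => (t : ℕ) + 1 < s), k t)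
                      ^ (n - m - 1)) := by
  obtain ⟨t, rfl⟩ : ∃ t, s = t + 1 := ⟨s - 1, by omega⟩
  rw [pow_eq_sum_headSum_add_tailSum hsn, tailSum]
  congr 1
  refine sum_congr rfl fun m hm => sum_congr rfl fun k hk => ?_
  rw [tailTerm, sub_sum_init_eq hk (by have := mem_Icc.1 hm; omega)]
  rfl
end

section
/- For every integer N ≥ 1 and every real x with 0 ≤ x < 1/N, ∑_{a=0}^{N} (a+1)^{a-1} · C(N,a) · x^a · (1-(a+1)x)^{N-a} = 1. -/
/-!
Expanding `(1 - (a + 1) x) ^ (N - a)` binomially, the coefficient of `x ^ m` in the sum is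
`C(N, m) · ∑ₐ (-1) ^ (m - a) C(m, a) (a + 1) ^ (m - 1)`. This is the `m`-th forward difference
of a polynomial of degree `m - 1`, so it vanishes for every `m ≥ 1`, and only the constant term `1`
survives. The identity therefore holds for every `x` in any commutative ring.
-/

open Finset

variable {R : Type*} [CommRing R]

theorem sum_range_neg_one_pow_mul_choose_mul_add_one_pow_eq_zero {k m : ℕ} (hk : k < m) :
    ∑ a ∈ range (m + 1), (-1) ^ (m - a) * (m.choose a : R) * ((a : R) + 1) ^ k = 0 := by
  have h := congr_fun (fwdDiff_iter_pow_eq_zero_of_lt (R := R) hk) 1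
  rw [fwdDiff_iter_eq_sum_shift] at h
  simpa [add_comm] using h

theorem sum_mul_choose_mul_pow_mul_one_sub_mul_pow (N : ℕ) (f c : ℕ → R) (x : R) :
    ∑ a ∈ range (N + 1), f a * N.choose a * x ^ a * (1 - c a * x) ^ (N - a) =
      ∑ m ∈ range (N + 1), N.choose m * x ^ m *
        ∑ a ∈ range (m + 1), (-1) ^ (m - a) * m.choose a * (f a * c a ^ (m - a)) := by
  have expand : ∀ a ∈ range (N + 1), f a * N.choose a * x ^ a * (1 - c a * x) ^ (N - a) =
      ∑ b ∈ range (N + 1 - a), f a * N.choose a * (N - a).choose b * (-c a) ^ b * x ^ (a + b) := by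
    intro a ha
    rw [sub_eq_add_neg, add_comm, add_pow, mul_sum,
      show N + 1 - a = N - a + 1 by have := mem_range.mp ha; omega]
    refine sum_congr rfl fun b _ => ?_
    rw [one_pow, neg_mul_eq_neg_mul, mul_pow, pow_add]
    ring
  rw [sum_congr rfl expand, ← sum_range_diag_flip]
  refine sum_congr rfl fun m _ => ?_
  rw [mul_sum]
  refine sum_congr rfl fun a ha => ?_
  have ham : a ≤ m := Nat.lt_succ_iff.mp (mem_range.mp ha)
  have hchoose : (N.choose a : R) * (N - a).choose (m - a) = N.choose m * m.choose a := by
    rw [← Nat.cast_mul, ← Nat.cast_mul, Nat.choose_mul ham]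
  rw [Nat.add_sub_cancel' ham, neg_pow, mul_assoc (f a), hchoose]
  ring

theorem add_one_pow_pred_mul_add_one_pow_sub {a n : ℕ} (ha : a ≤ n) :
    ((a : R) + 1) ^ (a - 1) * ((a : R) + 1) ^ (n - a) = ((a : R) + 1) ^ (n - 1) := by
  rcases Nat.eq_zero_or_pos a with rfl | hpos
  · simp
  · rw [← pow_add]
    congr 1
    omega

theorem sum_add_one_pow_pred_mul_choose_mul_pow_mul_one_sub_pow (N : ℕ) (x : R) :
    ∑ a ∈ range (N + 1), ((a : R) + 1) ^ (a - 1) * N.choose a * x ^ a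
        * (1 - ((a : R) + 1) * x) ^ (N - a) = 1 := by
  rw [sum_mul_choose_mul_pow_mul_one_sub_mul_pow N (fun a => ((a : R) + 1) ^ (a - 1))
    (fun a => (a : R) + 1), sum_range_succ', sum_eq_zero]
  · simp
  intro m _
  have hinner : ∑ a ∈ range (m + 1 + 1), (-1) ^ (m + 1 - a) * ((m + 1).choose a : R) *
      (((a : R) + 1) ^ (a - 1) * ((a : R) + 1) ^ (m + 1 - a)) = 0 := by
    rw [← sum_range_neg_one_pow_mul_choose_mul_add_one_pow_eq_zero (R := R) m.lt_succ_self]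
    refine sum_congr rfl fun a ha => ?_
    rw [add_one_pow_pred_mul_add_one_pow_sub (Nat.lt_succ_iff.mp (mem_range.mp ha)),
      Nat.add_sub_cancel]
  rw [hinner, mul_zero]

theorem avalanche_polynomial_identity_general (N : ℕ) (x : ℝ) :
    ∑ a ∈ range (N + 1),
        (((a + 1) ^ (a - 1) : ℕ) : ℝ) * (N.choose a : ℝ) * x ^ a
          * (1 - ((a : ℝ) + 1) * x) ^ (N - a)
      = 1 := by
  push_cast
  exact sum_add_one_pow_pred_mul_choose_mul_pow_mul_one_sub_pow N x

theorem avalanche_polynomial_identity (N : ℕ) (hN : 1 ≤ N) (x : ℝ)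
    (hx0 : 0 ≤ x) (hx : x < 1 / N) :
    ∑ a ∈ range (N + 1),
        (((a + 1) ^ (a - 1) : ℕ) : ℝ) * (N.choose a : ℝ) * x ^ a
          * (1 - ((a : ℝ) + 1) * x) ^ (N - a)
      = 1 :=
  avalanche_polynomial_identity_general N x
end

section
/- For every integer N ≥ 1 and real p with 0 ≤ p < 1/N, the quantities p_k = (1-Np)/(1-(N-1)p) · k^{k-2} · C(N-1,k-1) · p^{k-1} · (1-kp)^{N-k-1}, for k = 1,...,N, sum to 1; equivalently ∑_{k=1}^{N} k^{k-2} C(N-1,k-1) p^{k-1} (1-kp)^{N-k-1} = (1-(N-1)p)/(1-Np). -/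
/-!
With `q = 1 - N p`, the `k`-th term times `q` is `C(N-1, k-1) A_{k-1}(p) A_{N-k}(q)`, where
`A_n(x) = x (x + n p)^(n-1)` are the Abel polynomials of step `p`. These are of binomial type,
`A_n(x + y) = ∑ C(n,k) A_k(x) A_{n-k}(y)`, so `q` times the sum is `A_{N-1}(p + q)`, and
`A_{N-1}(p + q) = p + q` because `p + q + (N-1) p = 1`.

Binomial type is proved by induction on `n`, as a polynomial identity in `x`: `d/dx A_n(x)` is
`n A_{n-1}(x + p)`, so both sides have the same derivative by induction, and they agree at `x = 0`.
-/

open Finset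

namespace Polynomial

section Derivative

variable {R : Type*} [Ring R] [IsAddTorsionFree R]

theorem eq_of_derivative_eq_of_eval_zero_eq {p q : R[X]}
    (hd : derivative p = derivative q) (h0 : p.eval 0 = q.eval 0) : p = q := by
  have hc := eq_C_of_derivative_eq_zero (p := p - q) (by rw [derivative_sub, hd, sub_self])
  rwa [coeff_zero_eq_eval_zero, eval_sub, h0, sub_self, map_zero, sub_eq_zero] at hc

end Derivative

section Abel

variable {R : Type*} [CommRing R]

/-- The Abel polynomials `x (x + n a)^(n-1)` of step `a`, with the value `1` at `n = 0`
(which `x * x⁻¹` would give). -/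
noncomputable def abel (a : R) : ℕ → R[X]
  | 0 => 1
  | n + 1 => X * (X + C ((n + 1) * a)) ^ n

@[simp] theorem abel_zero (a : R) : abel a 0 = 1 := rfl

theorem abel_succ (a : R) (n : ℕ) : abel a (n + 1) = X * (X + C ((n + 1) * a)) ^ n := rfl

theorem eval_abel_succ (a z : R) (n : ℕ) :
    (abel a (n + 1)).eval z = z * (z + (n + 1) * a) ^ n := by
  simp [abel_succ]

theorem derivative_abel_succ (a : R) (n : ℕ) :
    derivative (abel a (n + 1)) = C (n + 1 : R) * (abel a n).comp (X + C a) := by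
  cases n with
  | zero => simp [abel_succ]
  | succ m =>
    simp only [abel_succ, derivative_mul, derivative_X, derivative_X_add_C_pow, mul_comp, X_comp,
      pow_comp, add_comp, C_comp]
    simp only [map_add, map_mul, map_natCast, map_one, Nat.cast_add, Nat.cast_one,
      add_tsub_cancel_right, pow_succ]
    ring

theorem abel_comp_X_add_C [IsAddTorsionFree R] (a y : R) (n : ℕ) :
    (abel a n).comp (X + C y) =
      ∑ k ∈ range (n + 1), C (n.choose k * (abel a (n - k)).eval y) * abel a k := by
  induction n with
  | zero => simp
  | succ n ih =>
    apply eq_of_derivative_eq_of_eval_zero_eq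
    · have hL : derivative ((abel a (n + 1)).comp (X + C y)) =
          C (n + 1 : R) * ((abel a n).comp (X + C y)).comp (X + C a) := by
        simp only [derivative_comp, derivative_abel_succ, derivative_add, derivative_X,
          derivative_C, add_zero, one_mul, mul_comp, C_comp, comp_assoc, add_comp, X_comp]
        rw [add_right_comm]
      rw [hL, ih, sum_comp, derivative_sum, sum_range_succ' _ (n + 1), mul_sum]
      simp only [abel_zero, derivative_mul, derivative_C, derivative_one, zero_mul, mul_zero,
        add_zero, zero_add, derivative_abel_succ, mul_comp, C_comp, Nat.add_sub_add_right]
      refine sum_congr rfl fun k _ => ?_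
      have hchoose : ((n + 1).choose (k + 1) : R) * (k + 1) = (n + 1) * n.choose k :=
        mod_cast congrArg (Nat.cast (R := R)) (Nat.add_one_mul_choose_eq n k).symm
      simp only [← mul_assoc, ← C_mul, ← hchoose]
      ring_nf
    · simp [eval_finsetSum, sum_range_succ', eval_abel_succ]

theorem eval_abel_add [IsAddTorsionFree R] (a x y : R) (n : ℕ) :
    (abel a n).eval (x + y) =
      ∑ k ∈ range (n + 1), n.choose k * (abel a k).eval x * (abel a (n - k)).eval y := by
  simpa [eval_finsetSum, mul_comm, mul_left_comm, mul_assoc] using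
    congrArg (eval x) (abel_comp_X_add_C a y n)

theorem eval_abel_self (a : R) (n : ℕ) : (abel a n).eval a = (n + 1) ^ (n - 1) * a ^ n := by
  cases n with
  | zero => simp
  | succ n =>
    rw [eval_abel_succ, show a + (n + 1) * a = (n + 2) * a by ring, mul_pow]
    push_cast
    ring

theorem eval_abel_of_add_eq_one {a z : R} {n : ℕ} (h : z + n * a = 1) :
    (abel a n).eval z = z := by
  cases n with
  | zero => simp_all
  | succ n => rw [eval_abel_succ]; push_cast at h; rw [h, one_pow, mul_one]

theorem eval_abel_eq_mul_zpow {K : Type*} [Field K] (a : K) {z : K} (hz : z ≠ 0) (n : ℕ) :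
    (abel a n).eval z = z * (z + n * a) ^ ((n : ℤ) - 1) := by
  cases n with
  | zero => simp [hz]
  | succ n => rw [eval_abel_succ]; push_cast; simp

end Abel

end Polynomial

theorem Finset.sum_Icc_one_eq_sum_range {M : Type*} [AddCommMonoid M] (f : ℕ → M) (n : ℕ) :
    ∑ k ∈ Icc 1 n, f k = ∑ j ∈ range n, f (j + 1) := by
  rw [range_eq_Ico, sum_Ico_add', zero_add, Ico_add_one_right_eq_Icc]

open Polynomial

theorem abelian_distribution_sums_to_one_general (N : ℕ) (hN : 1 ≤ N) (p : ℝ)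
    (hp : p < 1 / N) :
    ∑ k ∈ Icc 1 N,
        ((k ^ (k - 2) * (N - 1).choose (k - 1) : ℕ) : ℝ) * p ^ (k - 1)
          * (1 - (k : ℝ) * p) ^ ((N : ℤ) - k - 1)
      = (1 - ((N : ℝ) - 1) * p) / (1 - (N : ℝ) * p) := by
  obtain ⟨n, rfl⟩ : ∃ n, N = n + 1 := ⟨N - 1, by omega⟩
  set q : ℝ := 1 - ((n + 1 : ℕ) : ℝ) * p with hq_def
  have hq : q ≠ 0 := by
    have : ((n + 1 : ℕ) : ℝ) * p < 1 := by
      rwa [lt_div_iff₀ (by positivity), mul_comm] at hp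
    linarith
  have hrhs : (abel p n).eval (p + q) = 1 - (((n + 1 : ℕ) : ℝ) - 1) * p := by
    rw [eval_abel_of_add_eq_one] <;> (rw [hq_def]; push_cast; ring)
  rw [sum_Icc_one_eq_sum_range, eq_div_iff hq, mul_comm, mul_sum, ← hrhs, eval_abel_add]
  refine sum_congr rfl fun j hj => ?_
  have hjn : j ≤ n := Nat.lt_succ_iff.mp (mem_range.mp hj)
  rw [eval_abel_self, eval_abel_eq_mul_zpow p hq,
    show q + ((n - j : ℕ) : ℝ) * p = 1 - ((j + 1 : ℕ) : ℝ) * p by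
      rw [hq_def]; push_cast [Nat.cast_sub hjn]; ring,
    show ((n - j : ℕ) : ℤ) - 1 = ((n + 1 : ℕ) : ℤ) - (j + 1 : ℕ) - 1 by omega,
    show j + 1 - 2 = j - 1 by omega, Nat.add_sub_cancel, Nat.add_sub_cancel]
  push_cast
  ring

theorem abelian_distribution_sums_to_one (N : ℕ) (hN : 1 ≤ N) (p : ℝ)
    (hp0 : 0 ≤ p) (hp : p < 1 / N) :
    ∑ k ∈ Icc 1 N,
        ((k ^ (k - 2) * (N - 1).choose (k - 1) : ℕ) : ℝ) * p ^ (k - 1)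
          * (1 - (k : ℝ) * p) ^ ((N : ℤ) - k - 1)
      = (1 - ((N : ℝ) - 1) * p) / (1 - (N : ℝ) * p) :=
  abelian_distribution_sums_to_one_general N hN p hp
end

section
/- For every integer N ≥ 1 and real p with 0 ≤ p < 1/N, ∑_{k=1}^{N} k · p_k = 1/(1-(N-1)p), where p_k = (1-Np)/(1-(N-1)p) · k^{k-2} · C(N-1,k-1) · p^{k-1} · (1-kp)^{N-k-1}; equivalently (1-Np) ∑_{k=1}^{N} k^{k-1} C(N-1,k-1) p^{k-1} (1-kp)^{N-k-1} = 1. -/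
/-!
Reversing the order of summation (`k ↦ N - k`) and absorbing the factor `1 - N p` turns the sum
into the left side of Abel's binomial identity
`∑ₖ C(n,k) x (x + k z)^(k-1) (y + (n-k) z)^(n-k) = (x + y + n z)^n`
with `n = N - 1`, `x = 1 - N p` and `y = z = p`, whose right side is `1`.

Abel's identity is proved as an identity of polynomials in `y`, by induction on `n`: the
derivative of the `n`-th left side is `n` times the `(n-1)`-st one with `y` shifted by `z`, and at
`y = -(x + n z)` the left side is `x` times the `n`-th finite difference of the polynomial
`k ↦ (x + k z)^(n-1)` of degree `n - 1`, hence zero.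
-/

open Finset Polynomial fwdDiff

section Abel

variable {R : Type*} [CommRing R]

theorem sum_alternating_choose_mul_pow_eq_zero (x z : R) {m n : ℕ} (h : m < n) :
    ∑ k ∈ range (n + 1), (-1) ^ (n - k) * n.choose k * (x + k * z) ^ m = 0 := by
  have hdeg : ((C z * X + C x) ^ m).natDegree < n :=
    (natDegree_pow_le_of_le m natDegree_linear_le).trans_lt (by simpa using h)
  have hdiff := congrFun (fwdDiff_iter_eq_zero_of_degree_lt hdeg) 0
  rw [fwdDiff_iter_eq_sum_shift] at hdiff
  simp only [zero_add, nsmul_eq_mul, mul_one, eval_pow, eval_add, eval_mul, eval_C, eval_X,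
    zsmul_eq_mul, Int.cast_mul, Int.cast_pow, Int.cast_neg, Int.cast_one, Int.cast_natCast,
    Pi.zero_apply] at hdiff
  rw [← hdiff]
  refine sum_congr rfl fun k _ => ?_
  ring

/-- The value `1` at `k = 0` is what `x (x + k z)^(k-1)` gives over a field when `x ≠ 0`
(`abelCoeff_eq_mul_zpow`). -/
def abelCoeff (x z : R) : ℕ → R
  | 0 => 1
  | k + 1 => x * (x + (k + 1 : ℕ) * z) ^ k

theorem abelCoeff_mul_pow (x z : R) {k n : ℕ} (hk : k ≤ n + 1) :
    abelCoeff x z k * (x + k * z) ^ (n + 1 - k) = x * (x + k * z) ^ n := by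
  cases k with
  | zero => simp [abelCoeff, pow_succ']
  | succ k =>
    rw [abelCoeff, mul_assoc, ← pow_add]
    congr 2
    omega

noncomputable def abelPoly (x z w : R) (n : ℕ) : R[X] :=
  ∑ k ∈ range (n + 1),
    C (n.choose k * abelCoeff x z k) * (X + C (w + (n - k : ℕ) * z)) ^ (n - k)

theorem derivative_abelPoly (x z w : R) (n : ℕ) :
    derivative (abelPoly x z w (n + 1)) = C ((n + 1 : ℕ) : R) * abelPoly x z (w + z) n := by
  rw [abelPoly, abelPoly, derivative_sum, sum_range_succ, Nat.sub_self, pow_zero, mul_one,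
    derivative_C, add_zero, mul_sum]
  refine sum_congr rfl fun k hk => ?_
  have hk : k ≤ n := Nat.lt_succ_iff.mp (mem_range.mp hk)
  have hchoose : ((n + 1).choose k : R) * ((n + 1 - k : ℕ) : R) = (n + 1 : ℕ) * n.choose k := by
    rw [mul_comm ((n + 1 : ℕ) : R), ← Nat.cast_mul, ← Nat.cast_mul, Nat.choose_mul_succ_eq]
  have hexp : n + 1 - k = n - k + 1 := by omega
  rw [derivative_C_mul, derivative_X_add_C_pow, ← mul_assoc, ← C_mul, ← mul_assoc, ← C_mul,
    mul_right_comm, hchoose, hexp, Nat.add_sub_cancel, mul_assoc, C_mul]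
  congr 4
  push_cast
  ring

theorem eval_abelPoly_eq_zero (x z w : R) (n : ℕ) :
    (abelPoly x z w (n + 1)).eval (-(x + w + (n + 1 : ℕ) * z)) = 0 := by
  have hterm : ∀ k ∈ range (n + 2),
      ((n + 1).choose k * abelCoeff x z k) *
          (-(x + w + (n + 1 : ℕ) * z) + (w + (n + 1 - k : ℕ) * z)) ^ (n + 1 - k)
        = x * ((-1) ^ (n + 1 - k) * (n + 1).choose k * (x + k * z) ^ n) := by
    intro k hk
    have hk : k ≤ n + 1 := Nat.lt_succ_iff.mp (mem_range.mp hk)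
    have hbase : -(x + w + (n + 1 : ℕ) * z) + (w + (n + 1 - k : ℕ) * z) = -(x + k * z) := by
      push_cast [Nat.cast_sub hk]
      ring
    rw [hbase, neg_pow, mul_comm ((-1 : R) ^ _), ← mul_assoc, mul_assoc _ (abelCoeff x z k),
      abelCoeff_mul_pow x z hk]
    ring
  simp only [abelPoly, eval_finsetSum, eval_mul, eval_C, eval_pow, eval_add, eval_X]
  rw [sum_congr rfl hterm, ← mul_sum,
    sum_alternating_choose_mul_pow_eq_zero x z (Nat.lt_succ_self n), mul_zero]

variable [IsAddTorsionFree R]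

theorem abelPoly_eq_X_add_C_pow (x z w : R) (n : ℕ) :
    abelPoly x z w n = (X + C (x + w + n * z)) ^ n := by
  induction n generalizing w with
  | zero => simp [abelPoly, abelCoeff]
  | succ n ih =>
    set Q : R[X] := (X + C (x + w + (n + 1 : ℕ) * z)) ^ (n + 1)
    have hderiv : derivative (abelPoly x z w (n + 1) - Q) = 0 := by
      rw [derivative_sub, derivative_abelPoly, ih, derivative_X_add_C_pow, Nat.add_sub_cancel,
        sub_eq_zero]
      congr 4
      push_cast
      ring
    have hconst := eq_C_of_derivative_eq_zero hderiv
    have heval := congrArg (eval (-(x + w + (n + 1 : ℕ) * z))) hconst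
    simp only [Q, eval_sub, eval_abelPoly_eq_zero, eval_C, eval_pow, eval_add, eval_X,
      neg_add_cancel, zero_pow (Nat.succ_ne_zero n), sub_zero] at heval
    rwa [← heval, map_zero, sub_eq_zero] at hconst

theorem sum_choose_mul_abelCoeff_mul_pow (x y z : R) (n : ℕ) :
    ∑ k ∈ range (n + 1), n.choose k * abelCoeff x z k * (y + (n - k : ℕ) * z) ^ (n - k)
      = (x + y + n * z) ^ n := by
  have h := congrArg (eval y) (abelPoly_eq_X_add_C_pow x z 0 n)
  simp only [abelPoly, eval_finsetSum, eval_mul, eval_C, eval_pow, eval_add, eval_X,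
    zero_add] at h
  rw [h]
  ring

end Abel

section Field

variable {K : Type*} [Field K]

theorem abelCoeff_eq_mul_zpow {x : K} (hx : x ≠ 0) (z : K) (k : ℕ) :
    abelCoeff x z k = x * (x + k * z) ^ ((k : ℤ) - 1) := by
  cases k with
  | zero => simp [abelCoeff, hx]
  | succ k => simp [abelCoeff]

theorem mul_sum_Icc_eq_sum_choose_mul_abelCoeff (n : ℕ) (p : K)
    (hu : 1 - ((n + 1 : ℕ) : K) * p ≠ 0) :
    (1 - ((n + 1 : ℕ) : K) * p) * ∑ j ∈ Icc 1 (n + 1),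
        ((j ^ (j - 1) * n.choose (j - 1) : ℕ) : K) * p ^ (j - 1)
          * (1 - (j : K) * p) ^ (((n + 1 : ℕ) : ℤ) - j - 1)
      = ∑ k ∈ range (n + 1), n.choose k * abelCoeff (1 - ((n + 1 : ℕ) : K) * p) p k
          * (p + (n - k : ℕ) * p) ^ (n - k) := by
  rw [mul_sum]
  refine sum_nbij' (fun j => n + 1 - j) (fun k => n + 1 - k) ?_ ?_ ?_ ?_ ?_
  · intro j hj; simp only [mem_Icc, mem_range] at *; omega
  · intro k hk; simp only [mem_Icc, mem_range] at *; omega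
  · intro j hj; simp only [mem_Icc] at hj; omega
  · intro k hk; simp only [mem_range] at hk; omega
  intro j hj
  simp only [mem_Icc] at hj
  have hreflect : n - (n + 1 - j) = j - 1 := by omega
  have hbase : p + ((j - 1 : ℕ) : K) * p = j * p := by
    push_cast [Nat.cast_sub hj.1]
    ring
  have hcoeff : 1 - ((n + 1 : ℕ) : K) * p + ((n + 1 - j : ℕ) : K) * p = 1 - j * p := by
    push_cast [Nat.cast_sub hj.2]
    ring
  have hexp : ((n + 1 - j : ℕ) : ℤ) - 1 = ((n + 1 : ℕ) : ℤ) - j - 1 := by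
    push_cast [Nat.cast_sub hj.2]
    ring
  rw [abelCoeff_eq_mul_zpow hu, hreflect, hbase, hcoeff, hexp,
    Nat.choose_symm_of_eq_add (by omega : n = (n + 1 - j) + (j - 1))]
  push_cast
  ring

end Field

theorem abelian_distribution_expectation_general (N : ℕ) (hN : 1 ≤ N) (p : ℝ)
    (hp : p < 1 / N) :
    (1 - (N : ℝ) * p) *
        ∑ k ∈ Icc 1 N,
          ((k ^ (k - 1) * (N - 1).choose (k - 1) : ℕ) : ℝ) * p ^ (k - 1)
            * (1 - (k : ℝ) * p) ^ ((N : ℤ) - k - 1)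
      = 1 := by
  obtain ⟨n, rfl⟩ : ∃ n, N = n + 1 := ⟨N - 1, by omega⟩
  have hu : 1 - ((n + 1 : ℕ) : ℝ) * p ≠ 0 := by
    have := (lt_div_iff₀ (by positivity : (0 : ℝ) < (n + 1 : ℕ))).mp hp
    linarith
  rw [Nat.add_sub_cancel, mul_sum_Icc_eq_sum_choose_mul_abelCoeff n p hu,
    sum_choose_mul_abelCoeff_mul_pow,
    show 1 - ((n + 1 : ℕ) : ℝ) * p + p + n * p = 1 by push_cast; ring, one_pow]

theorem abelian_distribution_expectation (N : ℕ) (hN : 1 ≤ N) (p : ℝ)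
    (hp0 : 0 ≤ p) (hp : p < 1 / N) :
    (1 - (N : ℝ) * p) *
        ∑ k ∈ Icc 1 N,
          ((k ^ (k - 1) * (N - 1).choose (k - 1) : ℕ) : ℝ) * p ^ (k - 1)
            * (1 - (k : ℝ) * p) ^ ((N : ℤ) - k - 1)
      = 1 :=
  abelian_distribution_expectation_general N hN p hp
end

section
/- For every n ≥ 1, the number of rooted labeled trees on vertex set {0,1,...,n} with root 0 in which the set of vertices at distance l from the root has cardinality k_l for l = 1,...,r (with k_1 + ... + k_r = n, all k_l ≥ 1) equals n!/(k_1!...k_r!) · k_1^{k_2} k_2^{k_3} ... k_{r-1}^{k_r}. -/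
open Finset

/-!
A rooted tree is determined by its distance-to-the-root function `L` together with the map
sending every other vertex to its unique neighbour one level closer to the root. Conversely, for
any `L` vanishing at the root, every choice of a parent one level below each non-root vertex
gives a connected graph with one edge per non-root vertex, i.e. a tree, whose distance function
is `L`. So the trees are counted by the `n! / ∏ k_l!` ways of distributing the non-root labels
over the levels, times the `∏ k_{l-1} ^ k_l` choices of parents. The multinomial count is the
orbit–stabilizer theorem for permutations acting on functions by precomposition.
-/

open SimpleGraph

theorem card_fun_fiber_card_mul_prod_factorial {α β : Type*} [Fintype α] [Fintype β]
    (c : β → ℕ) (hc : ∑ b, c b = Fintype.card α) :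
    Nat.card {f : α → β // ∀ b, Nat.card {a // f a = b} = c b} * ∏ b, (c b).factorial =
      (Fintype.card α).factorial := by
  classical
  obtain ⟨e⟩ : Nonempty (α ≃ Σ b, Fin (c b)) := Fintype.card_eq.1 (by simp [hc])
  set f₀ : α → β := fun a => (e a).1
  have hfiber (b : β) : Nat.card {a // f₀ a = b} = c b := by
    rw [Nat.card_congr ((e.subtypeEquiv fun a => Iff.rfl).trans (Equiv.sigmaSubtype b))]
    simp
  have horbit :
      MulAction.orbit (Equiv.Perm α)ᵈᵐᵃ f₀ = {f | ∀ b, Nat.card {a // f a = b} = c b} := by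
    ext f
    simp only [Set.mem_ofPred_eq, MulAction.mem_orbit_iff]
    constructor
    · rintro ⟨σ, rfl⟩ b
      rw [← hfiber b]
      exact Nat.card_congr ((DomMulAct.mk.symm σ).subtypeEquiv fun a => Iff.rfl)
    · intro hf
      have (b : β) : Nonempty ({a // f a = b} ≃ {a // f₀ a = b}) :=
        Finite.card_eq.1 ((hf b).trans (hfiber b).symm)
      refine ⟨DomMulAct.mk (Equiv.ofFiberEquiv fun b => (this b).some), ?_⟩
      funext a
      exact Equiv.ofFiberEquiv_map (fun b => (this b).some) a
  have hstab : Nat.card (MulAction.stabilizer (Equiv.Perm α)ᵈᵐᵃ f₀) = ∏ b, (c b).factorial := by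
    rw [Nat.card_congr (DomMulAct.mk.symm.subtypeEquiv (p := (· ∈ MulAction.stabilizer _ f₀))
      (q := fun g : Equiv.Perm α => f₀ ∘ g = f₀) fun _ => DomMulAct.mem_stabilizer_iff),
      Nat.card_eq_fintype_card, DomMulAct.stabilizer_card]
    simp_rw [← Nat.card_eq_fintype_card, hfiber]
  have horbit_card : Nat.card {f : α → β // ∀ b, Nat.card {a // f a = b} = c b} =
      (MulAction.stabilizer (Equiv.Perm α)ᵈᵐᵃ f₀).index := by
    rw [MulAction.index_stabilizer, horbit, ← Nat.card_coe_set_eq]; rfl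
  rw [← hstab, horbit_card, mul_comm, Subgroup.card_mul_index, Nat.card_congr DomMulAct.mk.symm,
    Nat.card_eq_fintype_card, Fintype.card_perm]

lemma exists_eq_of_sum_card_fiber_eq {α β γ : Type*} [Finite α] [Fintype γ] {g : α → β}
    {e : γ → β} (he : e.Injective) (h : ∑ c, Nat.card {a // g a = e c} = Nat.card α) (a : α) :
    ∃ c, g a = e c := by
  have hinj : Function.Injective fun s : Σ c, {a // g a = e c} => (s.2 : α) := by
    rintro ⟨c, a, ha⟩ ⟨c', a', ha'⟩ (rfl : a = a')
    obtain rfl : c = c' := he (ha.symm.trans ha')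
    rfl
  obtain ⟨⟨c, a', ha⟩, rfl⟩ := (hinj.bijective_of_nat_card_le (by rw [Nat.card_sigma, h])).2 a
  exact ⟨c, ha⟩

lemma Fin.natCard_subtype_of_not_zero {n : ℕ} (p : Fin (n + 1) → Prop) (h0 : ¬p 0) :
    Nat.card {v // p v} = Nat.card {i : Fin n // p i.succ} := by
  classical
  simp only [Nat.card_eq_fintype_card, Fintype.card_subtype]
  rw [Fin.card_filter_univ_succ, if_neg h0]

section ParentMap

variable {V : Type*} {x : V} {L : V → ℕ}

abbrev ParentMap (x : V) (L : V → ℕ) : Type _ := ∀ v : {v // v ≠ x}, {u // L u + 1 = L v}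

namespace ParentMap

variable (P : ParentMap x L)

def graph : SimpleGraph V := fromEdgeSet (Set.range fun v => s((P v : V), (v : V)))

lemma parent_ne (v : {v // v ≠ x}) : (P v : V) ≠ v := fun h => by
  have := (P v).2; rw [h] at this; omega

lemma graph_adj {u w : V} :
    P.graph.Adj u w ↔ ∃ v, ((P v : V) = u ∧ (v : V) = w) ∨ ((P v : V) = w ∧ (v : V) = u) := by
  simp only [graph, fromEdgeSet_adj, Set.mem_range, Sym2.eq_iff]
  constructor
  · exact fun ⟨h, _⟩ => h
  · rintro ⟨v, (⟨rfl, rfl⟩ | ⟨rfl, rfl⟩)⟩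
    · exact ⟨⟨v, Or.inl ⟨rfl, rfl⟩⟩, P.parent_ne v⟩
    · exact ⟨⟨v, Or.inr ⟨rfl, rfl⟩⟩, (P.parent_ne v).symm⟩

lemma adj_parent (v : {v // v ≠ x}) : P.graph.Adj (P v) v :=
  P.graph_adj.2 ⟨v, Or.inl ⟨rfl, rfl⟩⟩

lemma level_le_of_adj {u w : V} (h : P.graph.Adj u w) : L w ≤ L u + 1 := by
  obtain ⟨v, ⟨rfl, rfl⟩ | ⟨rfl, rfl⟩⟩ := P.graph_adj.1 h <;> have := (P v).2 <;> omega

lemma eq_parent_of_adj {u : V} {v : {v // v ≠ x}} (h : P.graph.Adj u v) (hu : L u + 1 = L v) :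
    u = P v := by
  obtain ⟨w, ⟨rfl, hw⟩ | ⟨hw, rfl⟩⟩ := P.graph_adj.1 h
  · rw [Subtype.ext hw]
  · have := (P w).2; rw [hw] at this; omega

lemma level_le_length {u w : V} (p : P.graph.Walk u w) : L w ≤ L u + p.length := by
  induction p with
  | nil => simp
  | cons h _ ih => have := P.level_le_of_adj h; simp only [Walk.length_cons]; omega

lemma exists_walk_length_eq (hx : L x = 0) (w : V) : ∃ p : P.graph.Walk x w, p.length = L w := by
  induction hm : L w generalizing w with
  | zero =>
    by_cases hw : w = x
    · subst hw; exact ⟨.nil, rfl⟩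
    · have : L (P ⟨w, hw⟩) + 1 = L w := (P ⟨w, hw⟩).2
      omega
  | succ m ih =>
    have hw : w ≠ x := by rintro rfl; omega
    have : L (P ⟨w, hw⟩) + 1 = L w := (P ⟨w, hw⟩).2
    obtain ⟨p, hp⟩ := ih (P ⟨w, hw⟩) (by omega)
    exact ⟨p.concat (P.adj_parent ⟨w, hw⟩), by rw [Walk.length_concat, hp]⟩

lemma dist_eq (hx : L x = 0) (w : V) : P.graph.dist x w = L w := by
  obtain ⟨p, hp⟩ := P.exists_walk_length_eq hx w
  obtain ⟨q, hq⟩ := p.reachable.exists_walk_length_eq_dist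
  have := P.level_le_length q
  have := dist_le p
  omega

lemma connected (hx : L x = 0) : P.graph.Connected := by
  have : Nonempty V := ⟨x⟩
  refine .mk fun u w => ?_
  obtain ⟨p, -⟩ := P.exists_walk_length_eq hx u
  obtain ⟨q, -⟩ := P.exists_walk_length_eq hx w
  exact p.reachable.symm.trans q.reachable

lemma edgeSet_eq : P.graph.edgeSet = Set.range fun v => s((P v : V), (v : V)) := by
  rw [graph, edgeSet_fromEdgeSet, sdiff_eq_left, Set.disjoint_left]
  rintro _ ⟨v, rfl⟩
  exact P.parent_ne v

lemma edge_injective : Function.Injective fun v => s((P v : V), (v : V)) := by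
  intro v w h
  obtain ⟨-, h⟩ | ⟨hv, hw⟩ := Sym2.eq_iff.1 h
  · exact Subtype.ext h
  · have := (P v).2; have := (P w).2; rw [hv] at *; rw [hw] at *; omega

lemma isTree [Finite V] (hx : L x = 0) : P.graph.IsTree := by
  rw [isTree_iff_connected_and_card]
  refine ⟨P.connected hx, ?_⟩
  rw [P.edgeSet_eq, Nat.card_range_of_injective P.edge_injective]
  have := Fintype.ofFinite V
  classical
  rw [Nat.card_eq_fintype_card, Nat.card_eq_fintype_card, Fintype.card_subtype_compl,
    Fintype.card_subtype_eq]
  have := Fintype.card_pos_iff.2 ⟨x⟩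
  omega

end ParentMap

lemma SimpleGraph.Reachable.exists_adj_dist_add_one {G : SimpleGraph V} {v : V}
    (h : G.Reachable x v) (hne : x ≠ v) : ∃ u, G.Adj u v ∧ G.dist x u + 1 = G.dist x v := by
  obtain ⟨p, hp⟩ := h.exists_walk_length_eq_dist
  have hnil : ¬p.Nil := fun hnil => hne hnil.eq
  refine ⟨p.penultimate, p.adj_penultimate hnil, ?_⟩
  have hu : G.dist x p.penultimate + 1 ≤ G.dist x v := by
    have := dist_le p.dropLast
    rw [← Walk.concat_dropLast (p.adj_penultimate hnil), Walk.length_concat] at hp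
    omega
  have := (p.adj_penultimate hnil).diff_dist_adj (u := x)
  omega

theorem card_isTree_dist_eq [Fintype V] [DecidableEq V] (hx : L x = 0) :
    Nat.card {G : SimpleGraph V // G.IsTree ∧ ∀ v, G.dist x v = L v} =
      ∏ v : {v // v ≠ x}, Nat.card {u // L u + 1 = L v} := by
  rw [← Nat.card_pi]
  refine (Nat.card_eq_of_bijective (fun P : ParentMap x L => ⟨P.graph, P.isTree hx, P.dist_eq hx⟩)
    ⟨fun P Q h => ?_, fun ⟨G, hG, hL⟩ => ?_⟩).symm
  · have hPQ : P.graph = Q.graph := congrArg Subtype.val h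
    funext v
    exact Subtype.ext (Q.eq_parent_of_adj (hPQ ▸ P.adj_parent v) (P v).2)
  · have hparent (v : {v // v ≠ x}) : ∃ u, G.Adj u v ∧ L u + 1 = L v := by
      obtain ⟨u, hadj, hu⟩ := (hG.connected x v).exists_adj_dist_add_one v.2.symm
      exact ⟨u, hadj, by rwa [← hL, ← hL]⟩
    choose p hadj hp using hparent
    let P : ParentMap x L := fun v => ⟨p v, hp v⟩
    have hle : P.graph ≤ G := fun u w h => by
      obtain ⟨v, ⟨rfl, rfl⟩ | ⟨rfl, rfl⟩⟩ := P.graph_adj.1 h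
      · exact hadj v
      · exact (hadj v).symm
    -- a tree is minimally connected, so its connected subgraph `P.graph` is all of it
    exact ⟨P, Subtype.ext (le_antisymm hle
      ((isTree_iff_minimal_connected.1 hG).2 (P.connected hx) hle))⟩

end ParentMap

lemma prod_pow_eq_chainProd {r : ℕ} (k : Fin r → ℕ) (c : ℕ → ℕ) (h0 : c 0 = 1)
    (hc : ∀ j (hj : j + 1 < r), c (j + 1) = k ⟨j, by omega⟩) :
    ∏ l : Fin r, c l ^ k l = chainProd k := by
  cases r with
  | zero => simp [chainProd]
  | succ r =>
    rw [Fin.prod_univ_succ, chainProd, Fin.prod_univ_castSucc]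
    rw [Fin.val_zero, h0, one_pow, one_mul, dif_neg (by simp), mul_one]
    refine prod_congr rfl fun j _ => ?_
    rw [Fin.val_succ, hc j (by omega), dif_pos (by simp)]
    rfl

section Levels

variable {n r : ℕ}

def vertexLevel (f : Fin n → Fin r) : Fin (n + 1) → ℕ := Fin.cons 0 fun i => (f i : ℕ) + 1

@[simp] lemma vertexLevel_zero (f : Fin n → Fin r) : vertexLevel f 0 = 0 := rfl

@[simp] lemma vertexLevel_succ (f : Fin n → Fin r) (i : Fin n) :
    vertexLevel f i.succ = f i + 1 := rfl

lemma vertexLevel_injective : Function.Injective (vertexLevel : (Fin n → Fin r) → _) :=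
  fun f g h => funext fun i => Fin.ext (by simpa using congrFun h i.succ)

lemma card_vertexLevel_eq_zero (f : Fin n → Fin r) : Nat.card {v // vertexLevel f v = 0} = 1 := by
  rw [Nat.card_congr (Equiv.subtypeEquivRight (q := (· = 0)) fun v => ?_), Nat.card_unique]
  cases v using Fin.cases <;> simp

lemma card_vertexLevel_eq_succ (f : Fin n → Fin r) (l : Fin r) :
    Nat.card {v // vertexLevel f v = l + 1} = Nat.card {i // f i = l} := by
  rw [Fin.natCard_subtype_of_not_zero _ (by simp)]
  exact Nat.card_congr (Equiv.subtypeEquivRight fun i => by simp [Fin.ext_iff])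

lemma prod_card_parent_eq_chainProd {k : Fin r → ℕ} {f : Fin n → Fin r}
    (hf : ∀ l, Nat.card {i // f i = l} = k l) :
    ∏ v : {v : Fin (n + 1) // v ≠ 0}, Nat.card {u // vertexLevel f u + 1 = vertexLevel f v} =
      chainProd k := by
  classical
  rw [← (finSuccAboveEquiv 0).prod_comp]
  simp only [finSuccAboveEquiv_apply, Fin.succAbove_zero, vertexLevel_succ, add_left_inj]
  rw [← Fintype.prod_fiberwise' f (fun l : Fin r => Nat.card {u // vertexLevel f u = l})]
  simp only [prod_const, card_univ, ← Nat.card_eq_fintype_card, hf]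
  refine prod_pow_eq_chainProd k (fun l => Nat.card {u // vertexLevel f u = l})
    (card_vertexLevel_eq_zero f) fun j hj => ?_
  rw [card_vertexLevel_eq_succ f ⟨j, by omega⟩, hf]

end Levels

theorem card_isTree_levelCard_eq_card_sigma {n r : ℕ} (k : Fin r → ℕ) (hsum : ∑ i, k i = n) :
    Nat.card {G : SimpleGraph (Fin (n + 1)) //
        G.IsTree ∧ ∀ l : Fin r, Nat.card {v // G.dist 0 v = (l : ℕ) + 1} = k l} =
      Nat.card (Σ f : {f : Fin n → Fin r // ∀ l, Nat.card {i // f i = l} = k l},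
        {G : SimpleGraph (Fin (n + 1)) // G.IsTree ∧ ∀ v, G.dist 0 v = vertexLevel f.1 v}) := by
  have hcount {f : Fin n → Fin r} (hf : ∀ l, Nat.card {i // f i = l} = k l)
      {G : SimpleGraph (Fin (n + 1))} (hG : ∀ v, G.dist 0 v = vertexLevel f v) (l : Fin r) :
      Nat.card {v // G.dist 0 v = (l : ℕ) + 1} = k l := by
    simp_rw [hG]
    rw [card_vertexLevel_eq_succ, hf]
  refine (Nat.card_eq_of_bijective (fun s => ⟨s.2.1, s.2.2.1, hcount s.1.2 s.2.2.2⟩)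
    ⟨?_, ?_⟩).symm
  · rintro ⟨f, G, hG⟩ ⟨f', G', hG'⟩ h
    obtain rfl : G = G' := congrArg Subtype.val h
    refine Sigma.subtype_ext (Subtype.ext (vertexLevel_injective ?_)) rfl
    exact funext fun v => (hG.2 v).symm.trans (hG'.2 v)
  · rintro ⟨G, hG, hk⟩
    have hsum' :
        ∑ l : Fin r, Nat.card {i : Fin n // G.dist 0 i.succ = l + 1} = Nat.card (Fin n) := by
      rw [Nat.card_eq_fintype_card, Fintype.card_fin]
      refine (sum_congr rfl fun l _ => ?_).trans hsum
      rw [← Fin.natCard_subtype_of_not_zero (fun v => G.dist 0 v = l + 1) (by simp), hk]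
    -- the level sizes add up to `n`, so every non-root vertex lies at one of the levels `1, …, r`
    choose f hf using
      exists_eq_of_sum_card_fiber_eq (fun l l' h => Fin.ext (by simpa using h)) hsum'
    have hGf (v : Fin (n + 1)) : G.dist 0 v = vertexLevel f v := by
      cases v using Fin.cases <;> simp [hf]
    refine ⟨⟨⟨f, fun l => ?_⟩, G, hG, hGf⟩, rfl⟩
    rw [← card_vertexLevel_eq_succ, ← hk l]
    simp_rw [hGf]

theorem rooted_trees_by_levels_general (n r : ℕ)
    (k : Fin r → ℕ) (hsum : ∑ i, k i = n) :
    Nat.card {G : SimpleGraph (Fin (n + 1)) //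
        G.IsTree ∧
          ∀ l : Fin r, Nat.card {v : Fin (n + 1) // G.dist 0 v = (l : ℕ) + 1} = k l}
      = (n.factorial / ∏ i, (k i).factorial) * chainProd k := by
  classical
  have hlevels := card_fun_fiber_card_mul_prod_factorial (α := Fin n) k (by simp [hsum])
  rw [Fintype.card_fin] at hlevels
  rw [card_isTree_levelCard_eq_card_sigma k hsum, Nat.card_sigma,
    sum_congr rfl fun f _ => (card_isTree_dist_eq (vertexLevel_zero f.1)).trans
      (prod_card_parent_eq_chainProd f.2),
    sum_const, card_univ, smul_eq_mul, ← Nat.card_eq_fintype_card,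
    Nat.div_eq_of_eq_mul_left (prod_pos fun i _ => Nat.factorial_pos _) hlevels.symm]

theorem rooted_trees_by_levels (n r : ℕ) (hn : 1 ≤ n) (hr : 1 ≤ r)
    (k : Fin r → ℕ) (hk : ∀ i, 1 ≤ k i) (hsum : ∑ i, k i = n) :
    Nat.card {G : SimpleGraph (Fin (n + 1)) //
        G.IsTree ∧
          ∀ l : Fin r, Nat.card {v : Fin (n + 1) // G.dist 0 v = (l : ℕ) + 1} = k l}
      = (n.factorial / ∏ i, (k i).factorial) * chainProd k :=
  rooted_trees_by_levels_general n r k hsum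
end
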